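/- Let S be a finite set of clauses and G a finite set of terms. Then (S_∨^ω)_{↓G}, the set of instantiations over G of all countable disjunctions of pure instances of clauses of S, is a finite set of finite clauses. -/

import Mathlib

set_option maxHeartbeats 1000000

/-! ## Many-sorted first-order terms, literals, ω-clauses -/

structure Signature where
  Srt : Type
  Fn : Type
  arity : Fn → List Srt
  codom : Fn → Srt

inductive Term (σ : Signature) : Type where
  | var : σ.Srt → ℕ → Term σ
  | app : σ.Fn → List (Term σ) → Term σ

namespace Term

variable {σ : Signature}

/-- The sort of a term. -/
def sortOf : Term σ → σ.Srt
  | var s _ => s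
  | app f _ => σ.codom f

/-- Occurrence of a variable (a pair sort/index) in a term. -/
inductive VarOccurs : σ.Srt × ℕ → Term σ → Prop where
  | var (s n) : VarOccurs (s, n) (var s n)
  | app {v t} (f : σ.Fn) (args : List (Term σ)) :
      t ∈ args → VarOccurs v t → VarOccurs v (app f args)

/-- A term is ground if no variable occurs in it. -/
def Ground (t : Term σ) : Prop := ∀ v, ¬ VarOccurs v t

/-- Subterm relation. -/
inductive IsSubterm : Term σ → Term σ → Prop where
  | refl (t) : IsSubterm t t
  | app {u t} (f : σ.Fn) (args : List (Term σ)) :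
      t ∈ args → IsSubterm u t → IsSubterm u (app f args)

/-- Occurrence of a function symbol in a term. -/
inductive FnOccurs : σ.Fn → Term σ → Prop where
  | head (f args) : FnOccurs f (app f args)
  | app {g t} (f : σ.Fn) (args : List (Term σ)) :
      t ∈ args → FnOccurs g t → FnOccurs g (app f args)

end Term

/-- A (sort-preserving) substitution, mapping every variable to a term of the
same sort.  The domain need not be finite. -/
structure Subst (σ : Signature) where
  app : σ.Srt → ℕ → Term σ
  sort_eq : ∀ s n, (app s n).sortOf = s

namespace Term

variable {σ : Signature}

/-- Applying a substitution to a term. -/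
@[simp] theorem sortOf_var (s : σ.Srt) (n : ℕ) : (var (σ := σ) s n).sortOf = s := rfl
@[simp] theorem sortOf_app (f : σ.Fn) (args : List (Term σ)) :
    (app f args).sortOf = σ.codom f := rfl

def applySubst (θ : Subst σ) : Term σ → Term σ
  | var s n => θ.app s n
  | app f args => app f (args.attach.map (fun x => applySubst θ x.1))
decreasing_by
  have := List.sizeOf_lt_of_mem x.2
  simp only [Term.app.sizeOf_spec]
  omega

@[simp] theorem applySubst_var (θ : Subst σ) (s : σ.Srt) (n : ℕ) :
    (var s n).applySubst θ = θ.app s n := by rw [applySubst]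

theorem sortOf_applySubst (θ : Subst σ) (t : Term σ) :
    (t.applySubst θ).sortOf = t.sortOf := by
  cases t with
  | var s n => rw [applySubst_var, θ.sort_eq, sortOf_var]
  | app f args => rw [applySubst]; rw [sortOf_app, sortOf_app]

end Term

namespace Subst

variable {σ : Signature}

/-- The domain of a substitution: the variables it moves. -/
def domain (θ : Subst σ) : Set (σ.Srt × ℕ) :=
  { p | θ.app p.1 p.2 ≠ Term.var p.1 p.2 }

/-- A substitution is ground if it maps every variable of its domain to a ground term. -/
def IsGround (θ : Subst σ) : Prop := ∀ p ∈ θ.domain, (θ.app p.1 p.2).Ground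

/-- A pure substitution maps every variable to a variable (of the same sort). -/
def Pure (θ : Subst σ) : Prop := ∀ s n, ∃ m, θ.app s n = Term.var s m

/-- Composition of substitutions: apply `θ₁`, then `θ₂`. -/
def comp (θ₁ θ₂ : Subst σ) : Subst σ :=
  ⟨fun s n => (θ₁.app s n).applySubst θ₂, fun s n => by
    rw [Term.sortOf_applySubst]; exact θ₁.sort_eq s n⟩

open Classical in
/-- Restriction of a substitution to a set of variables. -/
noncomputable def restrict (θ : Subst σ) (V : Set (σ.Srt × ℕ)) : Subst σ :=
  ⟨fun s n => if (s, n) ∈ V then θ.app s n else Term.var s n, by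
    intro s n
    by_cases h : (s, n) ∈ V
    · simpa [h] using θ.sort_eq s n
    · simp [h]⟩

end Subst

/-- An equational literal `t ≈ s` (if `pos`) or `t ≉ s` (if `¬ pos`). -/
structure Literal (σ : Signature) where
  pos : Bool
  lhs : Term σ
  rhs : Term σ

namespace Literal

variable {σ : Signature}

def applySubst (θ : Subst σ) (L : Literal σ) : Literal σ :=
  ⟨L.pos, L.lhs.applySubst θ, L.rhs.applySubst θ⟩

def Ground (L : Literal σ) : Prop := L.lhs.Ground ∧ L.rhs.Ground

/-- The complementary literal. -/
def compl (L : Literal σ) : Literal σ := ⟨!L.pos, L.lhs, L.rhs⟩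

def VarOccurs (v : σ.Srt × ℕ) (L : Literal σ) : Prop :=
  Term.VarOccurs v L.lhs ∨ Term.VarOccurs v L.rhs

end Literal

/-- An ω-clause: a possibly infinite set of literals, read disjunctively.
    A (finite) clause is an ω-clause `C` with `C.Finite`. -/
abbrev OClause (σ : Signature) := Set (Literal σ)

variable {σ : Signature}

/-- Applying a substitution to an ω-clause. -/
def substC (θ : Subst σ) (C : OClause σ) : OClause σ := (Literal.applySubst θ) '' C

/-- A variable occurs in an ω-clause. -/
def varOccursC (v : σ.Srt × ℕ) (C : OClause σ) : Prop := ∃ L ∈ C, L.VarOccurs v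

/-- A function symbol occurs in an ω-clause. -/
def fnOccursC (f : σ.Fn) (C : OClause σ) : Prop :=
  ∃ L ∈ C, Term.FnOccurs f L.lhs ∨ Term.FnOccurs f L.rhs

/-- A term occurs in an ω-clause (i.e. it is a subterm of one of its sides). -/
def occursInC (t : Term σ) (C : OClause σ) : Prop :=
  ∃ L ∈ C, t.IsSubterm L.lhs ∨ t.IsSubterm L.rhs
/-! ## Interpretations and satisfaction -/

/-- A many-sorted interpretation: a domain, a nonempty subset for every sort,
and a function for every function symbol, respecting sorts. -/
structure Interp (σ : Signature) where
  D : Type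
  sortSet : σ.Srt → Set D
  nonemptyS : ∀ s, (sortSet s).Nonempty
  fapp : σ.Fn → List D → D
  fapp_mem : ∀ f args, fapp f args ∈ sortSet (σ.codom f)

namespace Interp

variable {σ : Signature} (I : Interp σ)

/-- Evaluation of a term under a valuation of the variables. -/
def eval (v : σ.Srt → ℕ → I.D) : Term σ → I.D
  | .var s n => v s n
  | .app f args => I.fapp f (args.attach.map (fun x => eval v x.1))
decreasing_by
  have := List.sizeOf_lt_of_mem x.2
  simp only [Term.app.sizeOf_spec]
  omega

/-- A canonical (arbitrary) valuation, used to evaluate ground expressions. -/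
noncomputable def gval : σ.Srt → ℕ → I.D := fun s _ => (I.nonemptyS s).choose

/-- Truth value of a literal under a valuation. -/
def litTrue (v : σ.Srt → ℕ → I.D) (L : Literal σ) : Prop :=
  if L.pos then I.eval v L.lhs = I.eval v L.rhs else I.eval v L.lhs ≠ I.eval v L.rhs

/-- `I` satisfies an ω-clause `C` iff every ground instance of `C` contains a
literal that evaluates to true in `I`. -/
def satO (C : OClause σ) : Prop :=
  ∀ θ : Subst σ, θ.IsGround → (∀ L ∈ C, (L.applySubst θ).Ground) →
    ∃ L ∈ C, I.litTrue I.gval (L.applySubst θ)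

/-- `I` satisfies a set of ω-clauses. -/
def satSet (S : Set (OClause σ)) : Prop := ∀ C ∈ S, I.satO C

/-- Every element of the domain of a sort is the value of a ground term of that sort. -/
def TermGenerated : Prop :=
  ∀ s, I.sortSet s = { d | ∃ t : Term σ, t.Ground ∧ t.sortOf = s ∧ I.eval I.gval t = d }

end Interp

variable {σ : Signature}

/-- `emb S S'` (written `S ⊴ S'` in the paper): every ω-clause of `S'` contains
some ω-clause of `S` as a subset. -/
def emb (S S' : Set (OClause σ)) : Prop := ∀ C' ∈ S', ∃ C ∈ S, C ⊆ C'

/-! ## ω-definable specifications ("theories") -/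

/-- An ω-definable specification `(ℐ, 𝒞)`: the class of interpretations ℐ is
given as the models of a set `Ax` of ω-clauses, and `Cl` is a class of clause sets. -/
structure Spec (σ : Signature) where
  Ax : Set (OClause σ)
  Cl : Set (Set (OClause σ))

namespace Spec

/-- `T`-satisfiability: some interpretation of the specification satisfies `S`. -/
def sat (T : Spec σ) (S : Set (OClause σ)) : Prop :=
  ∃ I : Interp σ, I.satSet T.Ax ∧ I.satSet S

/-- `T`-equisatisfiability. -/
def equisat (T : Spec σ) (S S' : Set (OClause σ)) : Prop := T.sat S ↔ T.sat S'

/-- Semantic entailment `S ⊨_T C`. -/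
def entails (T : Spec σ) (S : Set (OClause σ)) (C : OClause σ) : Prop :=
  ∀ I : Interp σ, I.satSet T.Ax → I.satSet S → I.satO C

end Spec

/-! ## Base and target sorts, Ω_B and Ω_N -/

section Hier

variable (B : σ.Srt → Prop)

/-- The partition of the sorts into base sorts (`B`) and target sorts is
admissible when every function symbol whose codomain is a base sort has all
its argument sorts among the base sorts. -/
def BaseClosed : Prop := ∀ f : σ.Fn, B (σ.codom f) → ∀ s ∈ σ.arity f, B s

/-- A base term: a term whose sort is a base sort. -/
def IsBaseTerm (t : Term σ) : Prop := B t.sortOf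

/-- A target term: a term of target sort containing no non-variable base term. -/
def IsTargetTerm (t : Term σ) : Prop :=
  ¬ B t.sortOf ∧ ∀ u : Term σ, u.IsSubterm t → B u.sortOf → ∃ s n, u = Term.var s n

/-- `Ω_B`: ω-clauses in which every occurring term is a base term. -/
def OmegaB : Set (OClause σ) := { C | ∀ t : Term σ, occursInC t C → B t.sortOf }

/-- `Ω_N`: ω-clauses in which every non-variable occurring term is a target term,
and both sides of every atom are target terms. -/
def OmegaN : Set (OClause σ) :=
  { C | (∀ t : Term σ, occursInC t C → (¬ ∃ s n, t = Term.var s n) → IsTargetTerm B t) ∧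
        ∀ L : Literal σ, L ∈ C → IsTargetTerm B L.lhs ∧ IsTargetTerm B L.rhs }

/-- A base theory: axioms and clause sets built from `Ω_B` (clauses are finite). -/
def IsBaseTheory (T : Spec σ) : Prop :=
  T.Ax ⊆ OmegaB B ∧ ∀ S ∈ T.Cl, S ⊆ OmegaB B ∧ ∀ C ∈ S, C.Finite

/-- A target theory: axioms and clause sets built from `Ω_N` (clauses are finite). -/
def IsTargetTheory (T : Spec σ) : Prop :=
  T.Ax ⊆ OmegaN B ∧ ∀ S ∈ T.Cl, S ⊆ OmegaN B ∧ ∀ C ∈ S, C.Finite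

/-- The base part of a clause: its literals built on base terms. -/
def basePart (C : OClause σ) : OClause σ := { L | L ∈ C ∧ B L.lhs.sortOf }

/-- The target part of a clause. -/
def targetPart (C : OClause σ) : OClause σ := { L | L ∈ C ∧ ¬ B L.lhs.sortOf }

end Hier

/-- The hierarchic expansion `ℬ∘𝒩` of the target theory `TN` over the base
theory `TB`: the axioms are joined, and the clause sets are the sets of clauses
`C_i^B ∨ C_i^N`, `1 ≤ i ≤ n`, whose base parts form a clause set of `TB.Cl` and
whose target parts form a clause set of `TN.Cl`. -/
def hexp (TB TN : Spec σ) : Spec σ where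
  Ax := TB.Ax ∪ TN.Ax
  Cl := { S | ∃ (n : ℕ) (f : Fin n → OClause σ × OClause σ),
      (Set.range fun i => (f i).1) ∈ TB.Cl ∧
      (Set.range fun i => (f i).2) ∈ TN.Cl ∧
      S = Set.range fun i => (f i).1 ∪ (f i).2 }

/-! ## Instantiation procedures -/

/-- `S_{↓G}`: all instantiations of clauses of `S` mapping every variable
occurring in the clause to a same-sort term of `G`. -/
def instOver (S : Set (OClause σ)) (G : Set (Term σ)) : Set (OClause σ) :=
  { D | ∃ C ∈ S, ∃ θ : Subst σ,
      (∀ p, varOccursC p C → θ.app p.1 p.2 ∈ G) ∧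
      (∀ p, ¬ varOccursC p C → θ.app p.1 p.2 = Term.var p.1 p.2) ∧
      D = substC θ C }

/-- `S_∨^⋆`: all finite (nonempty) disjunctions of pure instances of clauses of `S`. -/
def derivStar (S : Set (OClause σ)) : Set (OClause σ) :=
  { D | ∃ (n : ℕ) (C : Fin (n + 1) → OClause σ) (θ : Fin (n + 1) → Subst σ),
      (∀ i, C i ∈ S ∧ (θ i).Pure) ∧ D = ⋃ i, substC (θ i) (C i) }

/-- `S_∨^ω`: all countable disjunctions of pure instances of clauses of `S`. -/
def derivOmega (S : Set (OClause σ)) : Set (OClause σ) :=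
  { D | ∃ (C : ℕ → OClause σ) (θ : ℕ → Subst σ),
      (∀ i, C i ∈ S ∧ (θ i).Pure) ∧ D = ⋃ i, substC (θ i) (C i) }

/-- A base-complete instantiation procedure `Θ` for the base theory `TB`, with
associated ground-term sets `G`. -/
structure BaseComplete (TB : Spec σ) (Θ : Set (OClause σ) → Set (OClause σ))
    (G : Set (OClause σ) → Set (Term σ)) : Prop where
  finite : ∀ S ∈ TB.Cl, (G S).Finite
  groundG : ∀ S ∈ TB.Cl, ∀ t ∈ G S, t.Ground
  inst : ∀ S ∈ TB.Cl, Θ S = instOver S (G S)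
  equisat : ∀ S ∈ TB.Cl, TB.equisat S (Θ S)
  mono : ∀ S S' : Set (OClause σ), S ⊆ S' → G S ⊆ G S'
  derivG : ∀ S ∈ TB.Cl, G (derivStar S) ⊆ G S

section Hier2

variable (B : σ.Srt → Prop)

/-- `D` is a `B`-ground instance of `C`: it is obtained from `C` by grounding
exactly its base-sort variables. -/
def IsBGroundInstance (D C : OClause σ) : Prop :=
  ∃ θ : Subst σ,
    (∀ p, varOccursC p C → B p.1 → (θ.app p.1 p.2).Ground) ∧
    (∀ p, ¬ (varOccursC p C ∧ B p.1) → θ.app p.1 p.2 = Term.var p.1 p.2) ∧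
    D = substC θ C

open Classical in
/-- Application of a `B`-mapping `γ` (a map on ground base terms) to a term:
every (outermost) ground base subterm `t` is replaced by `γ t`. -/
noncomputable def applyBMap (γ : Term σ → Term σ) : Term σ → Term σ
  | .var s n => Term.var s n
  | .app f args =>
      if B (σ.codom f) ∧ (Term.app f args).Ground then γ (Term.app f args)
      else Term.app f (args.attach.map fun x => applyBMap γ x.1)
decreasing_by
  have := List.sizeOf_lt_of_mem x.2
  simp only [Term.app.sizeOf_spec]
  omega

/-- A `B`-mapping must map ground base terms to ground terms of the same sort. -/
def BMapOK (γ : Term σ → Term σ) : Prop :=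
  ∀ t : Term σ, t.Ground → B t.sortOf → (γ t).Ground ∧ (γ t).sortOf = t.sortOf

noncomputable def litBMap (γ : Term σ → Term σ) (L : Literal σ) : Literal σ :=
  ⟨L.pos, applyBMap B γ L.lhs, applyBMap B γ L.rhs⟩

noncomputable def clauseBMap (γ : Term σ → Term σ) (C : OClause σ) : OClause σ :=
  litBMap B γ '' C

/-- `Θ` is `ℬ`-preserving: it commutes with every `B`-mapping. -/
def Preserving (Θ : Set (OClause σ) → Set (OClause σ)) : Prop :=
  ∀ γ : Term σ → Term σ, BMapOK B γ →
    ∀ S C, C ∈ Θ S → clauseBMap B γ C ∈ Θ (clauseBMap B γ '' S)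

/-- A target-complete instantiation procedure for the target theory `TN`. -/
structure TargetComplete (TN : Spec σ) (Θ : Set (OClause σ) → Set (OClause σ)) : Prop where
  instOf : ∀ S : Set (OClause σ), ∀ D ∈ Θ S, ∃ C ∈ S, ∃ θ : Subst σ, D = substC θ C
  complete : ∀ S ∈ TN.Cl, ∀ S' : Set (OClause σ),
    (∀ D ∈ S', ∃ C ∈ S, IsBGroundInstance B D C) → TN.equisat S' (Θ S')
  preserving : Preserving B Θ
  mono : ∀ S S' : Set (OClause σ), S ⊆ S' → Θ S ⊆ Θ S'

/-- Base substitution: its domain consists of base variables. -/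
def IsBaseSubst (θ : Subst σ) : Prop := ∀ p ∈ θ.domain, B p.1

/-- Target substitution: its domain consists of target variables, and the image
of every variable of the domain contains no non-variable base term. -/
def IsTargetSubst (θ : Subst σ) : Prop :=
  ∀ p ∈ θ.domain, ¬ B p.1 ∧
    ∀ u : Term σ, u.IsSubterm (θ.app p.1 p.2) → B u.sortOf → ∃ s n, u = Term.var s n

end Hier2

/-! ## The combined instantiation procedure `Θ_B ⊗ Θ_N` -/

section Combined

variable (B : σ.Srt → Prop) (dia : σ.Srt → σ.Fn) (hdia : ∀ s, B s → σ.codom (dia s) = s)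

open Classical in
/-- The substitution `γ°`, mapping every base variable to the distinguished
constant `◆` of its sort. -/
noncomputable def gammaDiamond : Subst σ :=
  ⟨fun s n => if B s then Term.app (dia s) [] else Term.var s n, by
    intro s n
    by_cases h : B s
    · simp [h, hdia s h]
    · simp [h]⟩

/-- A term containing no occurrence of a `◆` constant. -/
def DiamondFree (t : Term σ) : Prop :=
  ∀ s, B s → ¬ Term.FnOccurs (dia s) t

/-- `θ'` is obtained from `θ` by replacing every occurrence of a `◆` constant
in the codomain of `θ` by a (base) variable. -/
def ReplacesDiamonds (θ θ' : Subst σ) : Prop :=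
  (∀ s n, (θ'.app s n).applySubst (gammaDiamond B dia hdia) = θ.app s n) ∧
  ∀ s n, DiamondFree B dia (θ'.app s n)

/-- The base variables introduced by `θ'` are fresh for `S`. -/
def FreshFor (θ' : Subst σ) (S : Set (OClause σ)) : Prop :=
  ∀ p : σ.Srt × ℕ, B p.1 → (∃ s n, Term.VarOccurs p (θ'.app s n)) →
    ∀ C ∈ S, ¬ varOccursC p C

/-- The combined instantiation procedure `(Θ_B ⊗ Θ_N)(S)`: the set of clauses
`(C^B ∨ C^N)θ'ρ` where `C ∈ S`, `C^N γ° θ ∈ Θ_N(S^N γ°)`, `θ'` is obtained from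
`θ` by replacing the occurrences of the `◆` constants by fresh variables, and
`ρ` maps every variable of `Cθ'` to a same-sort term of `G(S^B)`. -/
noncomputable def combinedProc (G : Set (OClause σ) → Set (Term σ))
    (ΘN : Set (OClause σ) → Set (OClause σ)) (S : Set (OClause σ)) : Set (OClause σ) :=
  { D | ∃ C ∈ S, ∃ θ θ' ρ : Subst σ,
      substC θ (substC (gammaDiamond B dia hdia) (targetPart B C)) ∈
        ΘN ((fun C' => substC (gammaDiamond B dia hdia) (targetPart B C')) '' S) ∧
      ReplacesDiamonds B dia hdia θ θ' ∧
      FreshFor B θ' S ∧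
      (∀ p, varOccursC p (substC θ' C) → ρ.app p.1 p.2 ∈ G (basePart B '' S)) ∧
      (∀ p, ¬ varOccursC p (substC θ' C) → ρ.app p.1 p.2 = Term.var p.1 p.2) ∧
      D = substC ρ (substC θ' C) }

end Combined

/-! ## Presburger arithmetic (generic over a copy of the arithmetic signature) -/

/-- A copy of the signature of Presburger arithmetic inside `σ`: a sort `nat`,
a sort `bool` with the constant `tt` (truth), and the symbols
`0, s, p, +, -, ≤, <, ≡_k`. -/
structure ArithOn (σ : Signature) where
  nat : σ.Srt
  bool : σ.Srt
  zero : σ.Fn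
  succ : σ.Fn
  pred : σ.Fn
  plus : σ.Fn
  neg : σ.Fn
  leq : σ.Fn
  lt : σ.Fn
  tt : σ.Fn
  eqmod : ℕ → σ.Fn
  codom_zero : σ.codom zero = nat
  codom_succ : σ.codom succ = nat
  codom_pred : σ.codom pred = nat
  codom_plus : σ.codom plus = nat
  codom_neg : σ.codom neg = nat
  codom_leq : σ.codom leq = bool
  codom_lt : σ.codom lt = bool
  codom_tt : σ.codom tt = bool
  codom_eqmod : ∀ k, σ.codom (eqmod k) = bool

/-- The equational literal `t ≈ u` (positive or negative). -/
def eqLit {σ : Signature} (t u : Term σ) (b : Bool) : Literal σ := ⟨b, t, u⟩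

namespace ArithOn

variable {σ : Signature} (A : ArithOn σ)

def trueT : Term σ := .app A.tt []
def zeroT : Term σ := .app A.zero []
def succT (t : Term σ) : Term σ := .app A.succ [t]
def predT (t : Term σ) : Term σ := .app A.pred [t]
def plusT (t u : Term σ) : Term σ := .app A.plus [t, u]
def negT (t : Term σ) : Term σ := .app A.neg [t]

/-- The numeral `s^n(0)`. -/
def num : ℕ → Term σ
  | 0 => A.zeroT
  | n + 1 => A.succT (num n)

/-- `s^k(t)`. -/
def iterSucc : ℕ → Term σ → Term σ
  | 0, t => t
  | k + 1, t => A.succT (iterSucc k t)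

/-- `p^k(t)`, i.e. `t - k`. -/
def iterPred : ℕ → Term σ → Term σ
  | 0, t => t
  | k + 1, t => A.predT (iterPred k t)

/-- The literal `(t ≤ u) ≈ true` (positive or negative). -/
def leqL (t u : Term σ) (b : Bool) : Literal σ := ⟨b, .app A.leq [t, u], A.trueT⟩
/-- The literal `(t < u) ≈ true` (positive or negative). -/
def ltL (t u : Term σ) (b : Bool) : Literal σ := ⟨b, .app A.lt [t, u], A.trueT⟩
/-- The literal `(t ≡_k u) ≈ true` (positive or negative). -/
def modL (k : ℕ) (t u : Term σ) (b : Bool) : Literal σ := ⟨b, .app (A.eqmod k) [t, u], A.trueT⟩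
/-- The variable `x` of sort `nat`. -/
def xv : Term σ := .var A.nat 0
/-- The variable `y` of sort `nat`. -/
def yv : Term σ := .var A.nat 1

/-- The ω-clause domain axiom `⋁_{k ∈ ℕ} (x ≈ s^k(0) ∨ x ≈ -s^k(0))`. -/
def domainAx : OClause σ :=
  { L | ∃ k : ℕ, L = eqLit A.xv (A.num k) true ∨ L = eqLit A.xv (A.negT (A.num k)) true }

/-- The axioms of Presburger arithmetic over the integers (Example 2.2). -/
def presburgerAx : Set (OClause σ) :=
  ({ A.domainAx,
    {eqLit (A.plusT A.zeroT A.xv) A.xv true},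
    {eqLit (A.plusT (A.succT A.xv) A.yv) (A.succT (A.plusT A.xv A.yv)) true},
    {eqLit (A.plusT (A.predT A.xv) A.yv) (A.predT (A.plusT A.xv A.yv)) true},
    {eqLit (A.predT (A.succT A.xv)) A.xv true},
    {eqLit (A.succT (A.predT A.xv)) A.xv true},
    {eqLit (A.negT A.zeroT) A.zeroT true},
    {eqLit (A.negT (A.succT A.xv)) (A.predT (A.negT A.xv)) true},
    {eqLit (A.negT (A.predT A.xv)) (A.succT (A.negT A.xv)) true},
    {A.ltL A.xv A.yv false, A.ltL (A.succT A.xv) (A.succT A.yv) true},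
    {A.ltL (A.succT A.xv) (A.succT A.yv) false, A.ltL A.xv A.yv true},
    {A.ltL A.xv A.yv false, A.ltL A.xv (A.succT A.yv) true},
    {A.leqL A.xv A.yv false, A.ltL A.xv A.yv true, eqLit A.xv A.yv true},
    {A.ltL A.xv A.yv false, A.leqL A.xv A.yv true},
    {eqLit A.xv A.yv false, A.leqL A.xv A.yv true},
    {A.ltL A.xv (A.succT A.xv) true} } : Set (OClause σ)) ∪
  (⋃ k : ℕ, ({ {A.modL k (A.num k) A.zeroT true},
               {A.modL k A.xv A.yv false, A.modL k (A.iterSucc k A.xv) A.yv true},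
               {A.modL k A.xv A.yv false, A.modL k (A.iterPred k A.xv) A.yv true} } :
      Set (OClause σ)))

/-- The axioms `χ > t + m` for `t ∈ TBs`. -/
def chiAx (chi : Term σ) (TBs : Set (Term σ)) (m : ℕ) : Set (OClause σ) :=
  { C | ∃ t ∈ TBs, C = {A.ltL (A.plusT t (A.num m)) chi true} }

/-- The admissible non-ground literals of the bounded fragment `𝒯_{ℤ,T_B,m}`:
`¬(x ≤ t)`, `¬(t ≤ x)` (`t ∈ T_B`), `¬(x ≤ y)`, and `¬(x ≡_k t)` (`k ∣ m`, `t ∈ T_B`). -/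
def allowedLitZ (TBs : Set (Term σ)) (m : ℕ) (L : Literal σ) : Prop :=
  L.Ground ∨
  (L.pos = false ∧ L.rhs = A.trueT ∧
    ((∃ n, ∃ t ∈ TBs, L.lhs = Term.app A.leq [Term.var A.nat n, t] ∨
        L.lhs = Term.app A.leq [t, Term.var A.nat n]) ∨
     (∃ n n', L.lhs = Term.app A.leq [Term.var A.nat n, Term.var A.nat n']) ∨
     (∃ k, 0 < k ∧ k ∣ m ∧ ∃ n, ∃ t ∈ TBs,
        L.lhs = Term.app (A.eqmod k) [Term.var A.nat n, t])))

/-- The clause sets of the bounded fragment `𝒯_{ℤ,T_B,m}`. -/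
def ClZ (B : σ.Srt → Prop) (TBs : Set (Term σ)) (m : ℕ) : Set (Set (OClause σ)) :=
  { S | S.Finite ∧ S ⊆ OmegaB B ∧ ∀ C ∈ S, C.Finite ∧ ∀ L ∈ C, A.allowedLitZ TBs m L }

/-- The specification `𝒯_{ℤ,T_B,m}` of the bounded fragment of Presburger
arithmetic: Presburger axioms plus `χ > t + m` for `t ∈ T_B`, and clause sets
with the restricted literals. -/
def TZspec (B : σ.Srt → Prop) (chi : Term σ) (TBs : Set (Term σ)) (m : ℕ) : Spec σ :=
  ⟨A.presburgerAx ∪ A.chiAx chi TBs m, A.ClZ B TBs m⟩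

/-- `B_S = {χ} ∪ { t | an atom x ≤ t occurs in S }`. -/
def BSet (chi : Term σ) (S : Set (OClause σ)) : Set (Term σ) :=
  {chi} ∪ { t | ∃ C ∈ S, ∃ L ∈ C, ∃ n, L.lhs = Term.app A.leq [Term.var A.nat n, t] }

/-- `G^ℤ_S = { t - l | t ∈ B_S, 0 ≤ l < m }`. -/
def GZ (chi : Term σ) (m : ℕ) (S : Set (OClause σ)) : Set (Term σ) :=
  { u | ∃ t ∈ A.BSet chi S, ∃ l < m, u = A.iterPred l t }

/-- The instantiation procedure `Θ_ℤ(S) = S_{↓G^ℤ_S}`. -/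
def ThetaZ (chi : Term σ) (m : ℕ) (S : Set (OClause σ)) : Set (OClause σ) :=
  instOver S (A.GZ chi m S)

end ArithOn

/-! ## Term algebras with membership constraints -/

/-- A term is built only on the function symbols of `F`. -/
def BuiltOn (F : Set σ.Fn) (t : Term σ) : Prop := ∀ f, Term.FnOccurs f t → f ∈ F

/-- The ground terms of sort `s` built on the free symbols `SigF`. -/
def groundSigma (SigF : Set σ.Fn) (s : σ.Srt) : Set (Term σ) :=
  { t | t.Ground ∧ BuiltOn SigF t ∧ t.sortOf = s }

/-- The list of variables `x_1, …, x_n` matching the argument sorts of `f`. -/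
def xList (f : σ.Fn) : List (Term σ) :=
  (σ.arity f).zipIdx.map fun q => Term.var q.1 q.2

/-- The list of variables `y_1, …, y_n` matching the argument sorts of `f`. -/
def yList (f : σ.Fn) : List (Term σ) :=
  (σ.arity f).zipIdx.map fun q => Term.var q.1 (q.2 + (σ.arity f).length)

/-- The axioms of the specification `𝒯_∈`: the domain axioms
`⋁_{t ground Σ-term of sort s} x ≈ t` for every base sort `s`, the injectivity
axioms `x_i ≈ y_i ∨ f(x₁,…,xₙ) ≉ f(y₁,…,yₙ)`, and the facts `p(t)` for `t ∈ p̂`. -/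
def AxMem (B : σ.Srt → Prop) (SigF : Set σ.Fn) (P : Set σ.Fn)
    (phat : σ.Fn → Set (Term σ)) (ttC : σ.Fn) : Set (OClause σ) :=
  { C | ∃ s, B s ∧ C = { L | ∃ t ∈ groundSigma SigF s, L = ⟨true, Term.var s 0, t⟩ } } ∪
  { C | ∃ f ∈ SigF, ∃ i : Fin (σ.arity f).length,
      C = { Literal.mk true (Term.var ((σ.arity f).get i) i.1)
              (Term.var ((σ.arity f).get i) (i.1 + (σ.arity f).length)),
            Literal.mk false (Term.app f (xList f)) (Term.app f (yList f)) } } ∪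
  { C | ∃ p ∈ P, ∃ t ∈ phat p, C = {Literal.mk true (Term.app p [t]) (Term.app ttC [])} }

/-- The non-ground literals allowed in the clause sets of `𝒯_∈`:
`¬ p(x)` with `p ∈ 𝔓`, or `x ≉ t` with `t` ground. -/
def allowedLitMem (P : Set σ.Fn) (ttC : σ.Fn) (L : Literal σ) : Prop :=
  L.Ground ∨
  (L.pos = false ∧
    ((∃ p ∈ P, ∃ s n, L.lhs = Term.app p [Term.var s n] ∧ L.rhs = Term.app ttC []) ∨
     (∃ s n, L.lhs = Term.var s n ∧ L.rhs.Ground)))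

/-- The clause sets of `𝒯_∈`. -/
def ClMem (P : Set σ.Fn) (ttC : σ.Fn) : Set (Set (OClause σ)) :=
  { S | S.Finite ∧ ∀ C ∈ S, C.Finite ∧ ∀ L ∈ C, allowedLitMem P ttC L }

/-- The specification `𝒯_∈ = (ℐ_∈, 𝒞_∈)` of term algebras with membership constraints. -/
def TMem (B : σ.Srt → Prop) (SigF : Set σ.Fn) (P : Set σ.Fn)
    (phat : σ.Fn → Set (Term σ)) (ttC : σ.Fn) : Spec σ :=
  ⟨AxMem B SigF P phat ttC, ClMem P ttC⟩

/-- The ground-term set `G^∈_S`: the ground terms `t` with an atom `x ≉ t` in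
`S`, together with a chosen element `s_Q` of every nonempty intersection
`⋂_{p ∈ Q} p̂`, `Q ⊆ 𝔓`. -/
def GMem (P : Set σ.Fn) (phat : σ.Fn → Set (Term σ)) (sel : Set σ.Fn → Term σ)
    (S : Set (OClause σ)) : Set (Term σ) :=
  { t | t.Ground ∧ ∃ C ∈ S, ∃ L ∈ C, ∃ s n, L.pos = false ∧ L.lhs = Term.var s n ∧ L.rhs = t } ∪
  { u | ∃ Q ⊆ P, (⋂ p ∈ Q, phat p).Nonempty ∧ u = sel Q }

/-- The instantiation procedure `Θ_∈(S) = S_{↓G^∈_S}`. -/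
def ThetaMem (P : Set σ.Fn) (phat : σ.Fn → Set (Term σ)) (sel : Set σ.Fn → Term σ)
    (S : Set (OClause σ)) : Set (OClause σ) :=
  instOver S (GMem P phat sel S)

/-! ## Hyper-linking (Lee–Plaisted) -/

/-- The closure of a clause set under the hyper-linking rule: from a nucleus
`⋁_{i} l_i` and satellites `m_i ∨ C_i`, derive `⋁_i l_i u`, where `u` is a
most general unifier of the pairs `(l_i, m_iᶜ)`. -/
inductive HLClosure (S : Set (OClause σ)) : OClause σ → Prop where
  | base {C : OClause σ} : C ∈ S → HLClosure S C
  | step (n : ℕ) (l m : Fin n → Literal σ) (Cs : Fin n → OClause σ) (u : Subst σ) :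
      HLClosure S (Set.range l) →
      (∀ i, HLClosure S (insert (m i) (Cs i))) →
      (∀ i, (l i).applySubst u = ((m i).compl).applySubst u) →
      (∀ τ : Subst σ, (∀ i, (l i).applySubst τ = ((m i).compl).applySubst τ) →
        ∃ ρ : Subst σ, ∀ s n', τ.app s n' = (u.app s n').applySubst ρ) →
      HLClosure S (Set.range fun i => (l i).applySubst u)

/-- The substitution replacing every variable of sort `s` by the constant `⊥_s`. -/
def botSubst (bot : σ.Srt → σ.Fn) (hbot : ∀ s, σ.codom (bot s) = s) : Subst σ :=
  ⟨fun s _ => Term.app (bot s) [], by intro s n; simp [hbot]⟩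

/-- The hyper-linking instantiation procedure `θ_fol`: close `S` under the
hyper-linking rule, then replace every remaining variable of sort `s` by `⊥_s`. -/
def thetaFol (bot : σ.Srt → σ.Fn) (hbot : ∀ s, σ.codom (bot s) = s)
    (S : Set (OClause σ)) : Set (OClause σ) :=
  substC (botSubst bot hbot) '' { C | HLClosure S C }

/-- The target theory `𝒯_fol'` of first-order logic without equality: no
axioms, and non-equational clause sets of `Ω_N` (every atom is of the form
`p(t₁,…,tₙ) ≈ true`). -/
def TFol (B : σ.Srt → Prop) (ttC : σ.Fn) : Spec σ :=
  ⟨∅, { S | (∀ C ∈ S, C.Finite) ∧ S ⊆ OmegaN B ∧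
        ∀ C ∈ S, ∀ L : Literal σ, L ∈ C → L.rhs = Term.app ttC [] }⟩

/-! ## A concrete signature for arrays with integer indices and uninterpreted elements -/

inductive ASort16 : Type where
  | nat | bool | arr | elem
deriving DecidableEq

inductive AFn16 : Type where
  | zero | succ | pred | plus | neg | leq | lt | tt
  | eqmod (k : ℕ) | chi | dia (s : ASort16) | arrC (i : ℕ) | elemC (i : ℕ) | select

/-- The signature of arrays with integer indices and uninterpreted elements. -/
def sig16 : Signature where
  Srt := ASort16
  Fn := AFn16
  arity := fun f => match f with
    | .succ | .pred | .neg => [.nat]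
    | .plus | .leq | .lt => [.nat, .nat]
    | .eqmod _ => [.nat, .nat]
    | .select => [.arr, .nat]
    | _ => []
  codom := fun f => match f with
    | .leq | .lt | .tt => .bool
    | .eqmod _ => .bool
    | .dia s => s
    | .arrC _ => .arr
    | .elemC _ => .elem
    | .select => .elem
    | _ => .nat

/-- The arithmetic symbols of `sig16`. -/
def A16 : ArithOn sig16 :=
  ⟨.nat, .bool, .zero, .succ, .pred, .plus, .neg, .leq, .lt, .tt, fun k => .eqmod k,
   rfl, rfl, rfl, rfl, rfl, rfl, rfl, rfl, fun _ => rfl⟩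

/-- The base sorts of `sig16`. -/
def B16 : sig16.Srt → Prop := fun s => s = .nat ∨ s = .bool

def chiT16 : Term sig16 := .app .chi []

def dia16 : sig16.Srt → sig16.Fn := fun s => .dia s

theorem hdia16 : ∀ s, B16 s → sig16.codom (dia16 s) = s := fun _ _ => rfl

/-- The function symbols allowed in the clause sets of `𝒯_{E-arrays}`. -/
def allowedFn16 : Set sig16.Fn :=
  { f | f = .select ∨ (∃ i, f = .arrC i) ∨ (∃ i, f = .elemC i) }

/-- The target theory `𝒯_{E-arrays}` of arrays with integer indices and
uninterpreted elements: all interpretations, and clause sets built on variables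
of sort `nat`, constants of sorts `array` and `elem`, and `select`. -/
def TEarr16 : Spec sig16 :=
  ⟨∅, { S | S.Finite ∧ S ⊆ OmegaN B16 ∧ ∀ C ∈ S, C.Finite ∧
        (∀ f, fnOccursC f C → f ∈ allowedFn16) ∧
        (∀ p, varOccursC p C → p.1 = ASort16.nat) }⟩

/-! ## A concrete signature for arrays with integer indices and (renamed) integer elements -/

inductive ASort17 : Type where
  | nat | bool | nat' | bool' | arr
deriving DecidableEq

inductive AFn17 : Type where
  | zero | succ | pred | plus | neg | leq | lt | tt | eqmod (k : ℕ) | chi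
  | zero' | succ' | pred' | plus' | neg' | leq' | lt' | tt' | eqmod' (k : ℕ)
  | arrC (i : ℕ) | natC' (i : ℕ) | dia (s : ASort17) | select

/-- The signature of arrays with integer indices and elements in a renamed copy
`nat'` of the integers; `select : array × nat → nat'`. -/
def sig17 : Signature where
  Srt := ASort17
  Fn := AFn17
  arity := fun f => match f with
    | .succ | .pred | .neg => [.nat]
    | .plus | .leq | .lt | .eqmod _ => [.nat, .nat]
    | .succ' | .pred' | .neg' => [.nat']
    | .plus' | .leq' | .lt' | .eqmod' _ => [.nat', .nat']
    | .select => [.arr, .nat]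
    | _ => []
  codom := fun f => match f with
    | .zero | .succ | .pred | .plus | .neg | .chi => .nat
    | .leq | .lt | .tt | .eqmod _ => .bool
    | .zero' | .succ' | .pred' | .plus' | .neg' | .natC' _ | .select => .nat'
    | .leq' | .lt' | .tt' | .eqmod' _ => .bool'
    | .arrC _ => .arr
    | .dia s => s

/-- The (unprimed) arithmetic symbols of `sig17`, over the sort `nat`. -/
def A17 : ArithOn sig17 :=
  ⟨.nat, .bool, .zero, .succ, .pred, .plus, .neg, .leq, .lt, .tt, fun k => .eqmod k,
   rfl, rfl, rfl, rfl, rfl, rfl, rfl, rfl, fun _ => rfl⟩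

/-- The primed arithmetic symbols of `sig17`, over the renamed sort `nat'`. -/
def A17' : ArithOn sig17 :=
  ⟨.nat', .bool', .zero', .succ', .pred', .plus', .neg', .leq', .lt', .tt',
   fun k => .eqmod' k, rfl, rfl, rfl, rfl, rfl, rfl, rfl, rfl, fun _ => rfl⟩

/-- The base sorts of `sig17`. -/
def B17 : sig17.Srt → Prop := fun s => s = .nat ∨ s = .bool

def chiT17 : Term sig17 := .app .chi []

def dia17 : sig17.Srt → sig17.Fn := fun s => .dia s

theorem hdia17 : ∀ s, B17 s → sig17.codom (dia17 s) = s := fun _ _ => rfl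

/-- The function symbols allowed in the clause sets of `𝒯'_{E-arrays-int}`. -/
def allowedFn17 : Set sig17.Fn :=
  { f | f = .select ∨ (∃ i, f = .arrC i) ∨ (∃ i, f = .natC' i) ∨
        f = .zero' ∨ f = .succ' ∨ f = .pred' ∨ f = .plus' ∨ f = .neg' ∨
        f = .leq' ∨ f = .lt' ∨ f = .tt' ∨ (∃ k, f = .eqmod' k) }

/-- The target theory `𝒯'_{E-arrays-int}` of arrays with integer indices and
renamed-copy integer elements: the renamed Presburger axioms over `nat'`, and
clause sets built on variables of sort `nat`, the renamed arithmetic symbols,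
constants of sorts `array` and `nat'`, and `select`. -/
def TEarrInt17 : Spec sig17 :=
  ⟨A17'.presburgerAx, { S | S.Finite ∧ S ⊆ OmegaN B17 ∧ ∀ C ∈ S, C.Finite ∧
        (∀ f, fnOccursC f C → f ∈ allowedFn17) ∧
        (∀ p, varOccursC p C → p.1 = ASort17.nat) }⟩

/-! ## Shifting translations on array indices (over `sig17`) -/

/-- Step (ii) of the shift transformation: every term `select(t, s)` (where `t`
is the array constant of index `i`) is replaced by `select(t', s + λ(t))`,
where `t' = arrC (fr i)` is a fresh array constant; when the index `s` is a
variable this composes with step (i) (`i ↦ i - λ(t)`), so the index is unchanged. -/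
def shiftTerm (lam : ℕ → Term sig17) (fr : ℕ → ℕ) : Term sig17 → Term sig17
  | .app .select [.app (.arrC i) [], .var s n] =>
      .app .select [.app (.arrC (fr i)) [], .var s n]
  | .app .select [.app (.arrC i) [], .app g us] =>
      .app .select [.app (.arrC (fr i)) [], A17.plusT (.app g us) (lam i)]
  | .var s n => .var s n
  | .app f args => .app f (args.attach.map fun x => shiftTerm lam fr x.1)
decreasing_by
  have := List.sizeOf_lt_of_mem x.2
  simp only [Term.app.sizeOf_spec]
  omega

/-- The term `select(arrC i, x_n)` with `x_n` a variable of sort `nat`. -/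
def selVar (i n : ℕ) : Term sig17 :=
  .app .select [.app (.arrC i) [], .var ASort17.nat n]

/-- The effect of the shift transformation on a literal of a clause `C`
(combining step (i), the substitution `i ↦ i - λ(t)` on the indices, with
step (ii), normalized modulo the arithmetic equivalences used in the paper). -/
inductive ShiftLitRel (lam : ℕ → Term sig17) (fr : ℕ → ℕ) (C : OClause sig17) :
    Literal sig17 → Literal sig17 → Prop where
  | le_vv (n n' : ℕ) (s : Term sig17) (hs : s.Ground) :
      ShiftLitRel lam fr C
        (A17.leqL (.var .nat n) (A17.plusT (.var .nat n') s) false)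
        (A17.leqL (.var .nat n) (.var .nat n') false)
  | le_vg_sel (n : ℕ) (s : Term sig17) (hs : s.Ground) (i : ℕ)
      (hocc : occursInC (selVar i n) C) :
      ShiftLitRel lam fr C (A17.leqL (.var .nat n) s false)
        (A17.leqL (.var .nat n) (A17.plusT s (lam i)) false)
  | le_vg_nosel (n : ℕ) (s : Term sig17) (hs : s.Ground)
      (hocc : ∀ i, ¬ occursInC (selVar i n) C) :
      ShiftLitRel lam fr C (A17.leqL (.var .nat n) s false)
        (A17.leqL (.var .nat n) s false)
  | le_gv_sel (n : ℕ) (s : Term sig17) (hs : s.Ground) (i : ℕ)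
      (hocc : occursInC (selVar i n) C) :
      ShiftLitRel lam fr C (A17.leqL s (.var .nat n) false)
        (A17.leqL (A17.plusT s (lam i)) (.var .nat n) false)
  | le_gv_nosel (n : ℕ) (s : Term sig17) (hs : s.Ground)
      (hocc : ∀ i, ¬ occursInC (selVar i n) C) :
      ShiftLitRel lam fr C (A17.leqL s (.var .nat n) false)
        (A17.leqL s (.var .nat n) false)
  | mod_sel (k n : ℕ) (s : Term sig17) (hs : s.Ground) (i : ℕ)
      (hocc : occursInC (selVar i n) C) :
      ShiftLitRel lam fr C (A17.modL k (.var .nat n) s false)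
        (A17.modL k (.var .nat n) (A17.plusT s (lam i)) false)
  | mod_nosel (k n : ℕ) (s : Term sig17) (hs : s.Ground)
      (hocc : ∀ i, ¬ occursInC (selVar i n) C) :
      ShiftLitRel lam fr C (A17.modL k (.var .nat n) s false)
        (A17.modL k (.var .nat n) s false)
  | target (L : Literal sig17)
      (hL : IsTargetTerm B17 L.lhs ∧ IsTargetTerm B17 L.rhs) :
      ShiftLitRel lam fr C L ⟨L.pos, shiftTerm lam fr L.lhs, shiftTerm lam fr L.rhs⟩

/-- The shifted clause set `shift(S)`. -/
def shiftSet (lam : ℕ → Term sig17) (fr : ℕ → ℕ) (S : Set (OClause sig17)) :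
    Set (OClause sig17) :=
  { C' | ∃ C ∈ S, C' = { L' | ∃ L ∈ C, ShiftLitRel lam fr C L L' } }

/-- The admissible arithmetic literals for shiftable clause sets:
`¬(i ≤ j + s)`, `¬(i ≤ s)`, `¬(s ≤ i)`, `¬(i ≡_k s)` with `i, j` variables of
sort `nat` and `s` a ground term of sort `nat`. -/
def arithShiftForm (L : Literal sig17) : Prop :=
  L.pos = false ∧ L.rhs = A17.trueT ∧
  ((∃ n n' s, Term.Ground s ∧ s.sortOf = ASort17.nat ∧
      L.lhs = Term.app AFn17.leq [Term.var ASort17.nat n, A17.plusT (Term.var ASort17.nat n') s]) ∨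
   (∃ n s, Term.Ground s ∧ s.sortOf = ASort17.nat ∧
      (L.lhs = Term.app AFn17.leq [Term.var ASort17.nat n, s] ∨
       L.lhs = Term.app AFn17.leq [s, Term.var ASort17.nat n])) ∨
   (∃ k n s, Term.Ground s ∧ s.sortOf = ASort17.nat ∧
      L.lhs = Term.app (AFn17.eqmod k) [Term.var ASort17.nat n, s]))

/-- A literal of the array target theory `𝒯'_{E-arrays-int}`. -/
def targetLit17 (L : Literal sig17) : Prop :=
  IsTargetTerm B17 L.lhs ∧ IsTargetTerm B17 L.rhs ∧
  ∀ f, (Term.FnOccurs f L.lhs ∨ Term.FnOccurs f L.rhs) → f ∈ allowedFn17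

/-- `S` is shiftable relatively to `λ` (Definition 4.16). -/
def Shiftable (lam : ℕ → Term sig17) (S : Set (OClause sig17)) : Prop :=
  -- the clauses of `S` are pairwise variable-disjoint
  (∀ C ∈ S, ∀ C' ∈ S, C ≠ C' → ∀ p, varOccursC p C → ¬ varOccursC p C') ∧
  -- (1) every literal is an admissible arithmetic literal or an array literal
  (∀ C ∈ S, ∀ L ∈ C, arithShiftForm L ∨ targetLit17 L) ∧
  -- (λ produces ground terms of sort nat)
  (∀ i : ℕ, (lam i).Ground ∧ (lam i).sortOf = ASort17.nat) ∧
  -- (2) for every literal ¬(i ≤ j + s), C contains select(t,i) and select(t',j)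
  --     with λ(t') - λ(t) equivalent to s
  (∀ C ∈ S, ∀ L ∈ C, ∀ n n' s,
    L = A17.leqL (.var .nat n) (A17.plusT (.var .nat n') s) false →
    ∃ i i', occursInC (selVar i n) C ∧ occursInC (selVar i' n') C ∧
      ∀ I : Interp sig17, I.satSet A17.presburgerAx →
        I.eval I.gval (lam i') = I.eval I.gval (A17.plusT (lam i) s)) ∧
  -- (3) if C contains select(t,i) and select(t',i) then λ(t) = λ(t')
  (∀ C ∈ S, ∀ n i i', occursInC (selVar i n) C → occursInC (selVar i' n) C →
    lam i = lam i') ∧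
  -- (4) if C contains an equation t ≈ t' between arrays then λ(t) = λ(t')
  (∀ C ∈ S, ∀ L : Literal sig17, L ∈ C → ∀ i i',
    L.lhs = Term.app (AFn17.arrC i) [] → L.rhs = Term.app (AFn17.arrC i') [] →
    lam i = lam i')

/-! ## A concrete signature for nested arrays -/

inductive ASort19 : Type where
  | nat | bool | nat' | bool' | nat'' | bool'' | arrU | arrP
deriving DecidableEq

inductive AFn19 : Type where
  | zero | succ | pred | plus | neg | leq | lt | tt | eqmod (k : ℕ) | chi
  | zero' | succ' | pred' | plus' | neg' | leq' | lt' | tt' | eqmod' (k : ℕ) | chi'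
  | zero'' | succ'' | pred'' | plus'' | neg'' | leq'' | lt'' | tt'' | eqmod'' (k : ℕ)
  | arrCU (i : ℕ) | arrCP (i : ℕ) | natC'' (i : ℕ) | dia (s : ASort19)
  | select | select'

/-- The signature of nested arrays: `select : arrayU × nat → nat'` and
`select' : arrayP × nat' → nat''`, with three renamed copies of the integers. -/
def sig19 : Signature where
  Srt := ASort19
  Fn := AFn19
  arity := fun f => match f with
    | .succ | .pred | .neg => [.nat]
    | .plus | .leq | .lt | .eqmod _ => [.nat, .nat]
    | .succ' | .pred' | .neg' => [.nat']
    | .plus' | .leq' | .lt' | .eqmod' _ => [.nat', .nat']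
    | .succ'' | .pred'' | .neg'' => [.nat'']
    | .plus'' | .leq'' | .lt'' | .eqmod'' _ => [.nat'', .nat'']
    | .select => [.arrU, .nat]
    | .select' => [.arrP, .nat']
    | _ => []
  codom := fun f => match f with
    | .zero | .succ | .pred | .plus | .neg | .chi => .nat
    | .leq | .lt | .tt | .eqmod _ => .bool
    | .zero' | .succ' | .pred' | .plus' | .neg' | .chi' | .select => .nat'
    | .leq' | .lt' | .tt' | .eqmod' _ => .bool'
    | .zero'' | .succ'' | .pred'' | .plus'' | .neg'' | .natC'' _ | .select' => .nat''
    | .leq'' | .lt'' | .tt'' | .eqmod'' _ => .bool''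
    | .arrCU _ => .arrU
    | .arrCP _ => .arrP
    | .dia s => s

def A19 : ArithOn sig19 :=
  ⟨.nat, .bool, .zero, .succ, .pred, .plus, .neg, .leq, .lt, .tt, fun k => .eqmod k,
   rfl, rfl, rfl, rfl, rfl, rfl, rfl, rfl, fun _ => rfl⟩

def A19' : ArithOn sig19 :=
  ⟨.nat', .bool', .zero', .succ', .pred', .plus', .neg', .leq', .lt', .tt',
   fun k => .eqmod' k, rfl, rfl, rfl, rfl, rfl, rfl, rfl, rfl, fun _ => rfl⟩

def A19'' : ArithOn sig19 :=
  ⟨.nat'', .bool'', .zero'', .succ'', .pred'', .plus'', .neg'', .leq'', .lt'', .tt'',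
   fun k => .eqmod'' k, rfl, rfl, rfl, rfl, rfl, rfl, rfl, rfl, fun _ => rfl⟩

/-- The base sorts of the outer combination. -/
def B19out : sig19.Srt → Prop := fun s => s = .nat ∨ s = .bool

/-- The base sorts of the inner combination. -/
def B19in : sig19.Srt → Prop := fun s => s = .nat' ∨ s = .bool'

def chiT19 : Term sig19 := .app .chi []
def chiT19' : Term sig19 := .app .chi' []

def dia19 : sig19.Srt → sig19.Fn := fun s => .dia s

theorem hdia19out : ∀ s, B19out s → sig19.codom (dia19 s) = s := fun _ _ => rfl
theorem hdia19in : ∀ s, B19in s → sig19.codom (dia19 s) = s := fun _ _ => rfl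

/-- The function symbols allowed in the clause sets of the innermost array theory. -/
def allowedFn19 : Set sig19.Fn :=
  { f | f = .select' ∨ (∃ i, f = .arrCP i) ∨ (∃ i, f = .natC'' i) ∨
        f = .zero'' ∨ f = .succ'' ∨ f = .pred'' ∨ f = .plus'' ∨ f = .neg'' ∨
        f = .leq'' ∨ f = .lt'' ∨ f = .tt'' ∨ (∃ k, f = .eqmod'' k) }

/-- The innermost target theory: the renamed array theory `𝒯'_{E-arrays-int}`
with `select' : arrayP × nat' → nat''`. -/
def TEarr19 : Spec sig19 :=
  ⟨A19''.presburgerAx, { S | S.Finite ∧ S ⊆ OmegaN B19in ∧ ∀ C ∈ S, C.Finite ∧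
        (∀ f, fnOccursC f C → f ∈ allowedFn19) ∧
        (∀ p, varOccursC p C → p.1 = ASort19.nat') }⟩


/-! ### Auxiliary lemmas for Proposition 3.23 -/

section Aux

variable {σ : Signature}

/-- Structural induction principle for terms. -/
theorem Term.indOn {P : Term σ → Prop}
    (hvar : ∀ s n, P (.var s n))
    (happ : ∀ f args, (∀ t ∈ args, P t) → P (.app f args)) :
    ∀ t, P t
  | .var s n => hvar s n
  | .app f args => happ f args (fun t ht => Term.indOn hvar happ t)
decreasing_by
  have := List.sizeOf_lt_of_mem ht
  simp only [Term.app.sizeOf_spec]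
  omega

theorem Term.applySubst_app' (θ : Subst σ) (f : σ.Fn) (args : List (Term σ)) :
    (Term.app f args).applySubst θ = Term.app f (args.map (·.applySubst θ)) := by
  rw [Term.applySubst]
  congr 1
  simp

/-- Applying a substitution only depends on the variables occurring in the term. -/
theorem Term.applySubst_congr {θ₁ θ₂ : Subst σ} :
    ∀ t : Term σ, (∀ s n, Term.VarOccurs (s, n) t → θ₁.app s n = θ₂.app s n) →
      t.applySubst θ₁ = t.applySubst θ₂ := by
  intro t
  induction t using Term.indOn with
  | hvar s n => intro h; simp [h s n (Term.VarOccurs.var s n)]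
  | happ f args ih =>
      intro h
      rw [Term.applySubst_app', Term.applySubst_app']
      congr 1
      exact List.map_congr_left fun a ha => ih a ha fun s n hv =>
        h s n (Term.VarOccurs.app f args ha hv)

/-- Composition of substitutions on terms. -/
theorem Term.applySubst_comp (θ ρ : Subst σ) :
    ∀ t : Term σ, (t.applySubst θ).applySubst ρ = t.applySubst (θ.comp ρ) := by
  intro t
  induction t using Term.indOn with
  | hvar s n => simp [Subst.comp]
  | happ f args ih =>
      rw [Term.applySubst_app', Term.applySubst_app', Term.applySubst_app',
        List.map_map]
      congr 1
      exact List.map_congr_left fun a ha => ih a ha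

theorem Literal.applySubst_comp (θ ρ : Subst σ) (L : Literal σ) :
    (L.applySubst θ).applySubst ρ = L.applySubst (θ.comp ρ) := by
  simp [Literal.applySubst, Term.applySubst_comp]

theorem Literal.applySubst_congr {θ₁ θ₂ : Subst σ} (L : Literal σ)
    (h : ∀ s n, L.VarOccurs (s, n) → θ₁.app s n = θ₂.app s n) :
    L.applySubst θ₁ = L.applySubst θ₂ := by
  simp only [Literal.applySubst]
  congr 1
  · exact Term.applySubst_congr _ fun s n hv => h s n (Or.inl hv)
  · exact Term.applySubst_congr _ fun s n hv => h s n (Or.inr hv)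

/-- Variable occurrences are transported along pure substitutions. -/
theorem Term.varOccurs_applySubst {θ : Subst σ} {s : σ.Srt} {n m : ℕ}
    (hm : θ.app s n = Term.var s m) :
    ∀ {t : Term σ}, Term.VarOccurs (s, n) t →
      Term.VarOccurs (s, m) (t.applySubst θ) := by
  intro t
  induction t using Term.indOn with
  | hvar s' n' =>
      intro hv
      cases hv
      rw [Term.applySubst_var, hm]
      exact Term.VarOccurs.var s m
  | happ f args ih =>
      intro hv
      cases hv with
      | app f args hmem hv' =>
          rw [Term.applySubst_app']
          exact Term.VarOccurs.app f _ (List.mem_map_of_mem hmem) (ih _ hmem hv')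

theorem Literal.varOccurs_applySubst {θ : Subst σ} {s : σ.Srt} {n m : ℕ}
    (hm : θ.app s n = Term.var s m) {L : Literal σ} (hv : L.VarOccurs (s, n)) :
    (L.applySubst θ).VarOccurs (s, m) := by
  cases hv with
  | inl h => exact Or.inl (Term.varOccurs_applySubst hm h)
  | inr h => exact Or.inr (Term.varOccurs_applySubst hm h)

/-- Lists of a given length with entries in a finite set form a finite set. -/
theorem finite_lists {α : Type*} {s : Set α} (hs : s.Finite) :
    ∀ n : ℕ, {l : List α | l.length = n ∧ ∀ x ∈ l, x ∈ s}.Finite := by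
  intro n
  induction n with
  | zero =>
      apply Set.Finite.subset (Set.finite_singleton ([] : List α))
      rintro l ⟨hl, -⟩
      simp [List.length_eq_zero_iff.mp hl]
  | succ n ih =>
      apply Set.Finite.subset (Set.Finite.image2 List.cons hs ih)
      rintro l ⟨hl, hmem⟩
      cases l with
      | nil => simp at hl
      | cons a l' =>
          exact Set.mem_image2_of_mem (hmem a (by simp))
            ⟨by simpa using hl, fun x hx => hmem x (by simp [hx])⟩

/-- The property of a substitution of mapping every variable into `G` or to itself. -/
def IntoG (G : Set (Term σ)) (τ : Subst σ) : Prop :=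
  ∀ s n, τ.app s n ∈ G ∨ τ.app s n = Term.var s n

/-- The set of instances of a term over substitutions into a finite `G` is finite. -/
theorem instSet_finite {G : Set (Term σ)} (hG : G.Finite) :
    ∀ t : Term σ, {u | ∃ τ : Subst σ, IntoG G τ ∧ u = t.applySubst τ}.Finite := by
  intro t
  induction t using Term.indOn with
  | hvar s n =>
      apply Set.Finite.subset (hG.insert (Term.var s n))
      rintro u ⟨τ, hτ, rfl⟩
      rw [Term.applySubst_var]
      rcases hτ s n with h | h
      · exact Set.mem_insert_of_mem _ h
      · rw [h]; exact Set.mem_insert _ _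
  | happ f args ih =>
      have hargs : {a | a ∈ args}.Finite := args.finite_toSet
      have hU : (⋃ a ∈ args, {u | ∃ τ : Subst σ, IntoG G τ ∧ u = a.applySubst τ}).Finite :=
        hargs.biUnion ih
      have hL := finite_lists hU args.length
      apply Set.Finite.subset (hL.image (Term.app f))
      rintro u ⟨τ, hτ, rfl⟩
      rw [Term.applySubst_app']
      refine ⟨args.map (·.applySubst τ), ⟨by simp, ?_⟩, rfl⟩
      intro x hx
      obtain ⟨a, ha, rfl⟩ := List.mem_map.mp hx
      exact Set.mem_biUnion ha ⟨τ, hτ, rfl⟩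

/-- The set of instances of a literal over substitutions into a finite `G` is finite. -/
theorem litInstSet_finite {G : Set (Term σ)} (hG : G.Finite) (L : Literal σ) :
    {M | ∃ τ : Subst σ, IntoG G τ ∧ M = L.applySubst τ}.Finite := by
  apply Set.Finite.subset
    (Set.Finite.image2 (fun a b => Literal.mk L.pos a b)
      (instSet_finite hG L.lhs) (instSet_finite hG L.rhs))
  rintro M ⟨τ, hτ, rfl⟩
  exact Set.mem_image2_of_mem ⟨τ, hτ, rfl⟩ ⟨τ, hτ, rfl⟩

end Aux

/-- Proposition 3.23: if `S` is a finite set of (finite) clauses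
and `G` a finite set of terms, then `(S_∨^ω)_{↓G}` is a finite set of finite
clauses. -/
theorem derivOmega_instOver_finite {σ : Signature}
    (S : Set (OClause σ)) (hS : S.Finite) (hSc : ∀ C ∈ S, C.Finite)
    (G : Set (Term σ)) (hG : G.Finite) :
    (instOver (derivOmega S) G).Finite ∧
    ∀ D ∈ instOver (derivOmega S) G, D.Finite := by
  classical
  set Lits : Set (Literal σ) :=
    ⋃ C ∈ S, ⋃ L ∈ C, {M | ∃ τ : Subst σ, IntoG G τ ∧ M = L.applySubst τ} with hLitsDef
  have hLits : Lits.Finite :=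
    hS.biUnion fun C hC => (hSc C hC).biUnion fun L _ => litInstSet_finite hG L
  have hsub : ∀ D ∈ instOver (derivOmega S) G, D ⊆ Lits := by
    rintro D ⟨Cω, ⟨Cs, θs, hCs, rfl⟩, ρ, hρ1, hρ2, rfl⟩
    rintro M ⟨L', hL', rfl⟩
    rw [Set.mem_iUnion] at hL'
    obtain ⟨i, hL'⟩ := hL'
    obtain ⟨L, hL, rfl⟩ := hL'
    obtain ⟨hCi, hpure⟩ := hCs i
    rw [Literal.applySubst_comp]
    set η := (θs i).comp ρ with hη
    set η' : Subst σ := ⟨fun s n => if η.app s n ∈ G then η.app s n else Term.var s n,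
      by
        intro s n
        by_cases h : η.app s n ∈ G
        · simpa [h] using η.sort_eq s n
        · simp [h]⟩ with hη'
    have hkey : ∀ s n, L.VarOccurs (s, n) → η.app s n ∈ G := by
      intro s n hv
      obtain ⟨m, hm⟩ := hpure s n
      have hocc : (L.applySubst (θs i)).VarOccurs (s, m) :=
        Literal.varOccurs_applySubst hm hv
      have hoccC : varOccursC (s, m) (⋃ j, substC (θs j) (Cs j)) :=
        ⟨L.applySubst (θs i), Set.mem_iUnion.mpr ⟨i, ⟨L, hL, rfl⟩⟩, hocc⟩
      have hG' := hρ1 (s, m) hoccC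
      have heq : η.app s n = ρ.app s m := by
        simp [hη, Subst.comp, hm]
      rw [heq]
      exact hG'
    have heq : L.applySubst η = L.applySubst η' := by
      apply Literal.applySubst_congr
      intro s n hv
      simp [hη', hkey s n hv]
    rw [heq]
    refine Set.mem_biUnion hCi (Set.mem_biUnion hL ?_)
    refine ⟨η', ?_, rfl⟩
    intro s n
    by_cases h : η.app s n ∈ G
    · left; simpa [hη', h] using h
    · right; simp [hη', h]
  constructor
  · exact Set.Finite.subset hLits.finite_subsets fun D hD => hsub D hD
  · exact fun D hD => hLits.subset (hsub D hD)
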